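/- Suppose C is a (2,M,q) code satisfying conditions (I) and (II). If C₁, C₂ ⊆ C with |C₁| ≤ 2, |C₂| ≤ 2, C₁ ≠ C₂ and desc(C₁) = desc(C₂), then a contradiction arises; i.e., distinct sub-codes of size at most 2 have distinct descendant codes (C is 2̄-separable). -/

import Mathlib

/-- The descendant code of a sub-code of a code of length 2, viewed as a set of pairs. -/
def desc2 {q : ℕ} (C' : Finset (Fin q × Fin q)) : Set (Fin q × Fin q) :=
  {x | (∃ c ∈ C', c.1 = x.1) ∧ (∃ c ∈ C', c.2 = x.2)}

/-- `C` is a `t`-MIPPC of length 2: for every descendant set produced by some nonempty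
sub-code of size at most `t`, all such parent sets have a common codeword. -/
def isMIPPC2 {q : ℕ} (t : ℕ) (C : Finset (Fin q × Fin q)) : Prop :=
  ∀ S : Set (Fin q × Fin q),
    (∃ C' : Finset (Fin q × Fin q), C' ⊆ C ∧ C'.Nonempty ∧ C'.card ≤ t ∧ desc2 C' = S) →
    ∃ c, ∀ C' : Finset (Fin q × Fin q),
      C' ⊆ C → C'.Nonempty → C'.card ≤ t → desc2 C' = S → c ∈ C'

/-- `A¹_a = {b : (a,b) ∈ C}`. -/
def A1 {q : ℕ} (C : Finset (Fin q × Fin q)) (a : Fin q) : Finset (Fin q) :=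
  (C.filter (fun c => c.1 = a)).image Prod.snd

/-- Condition (I). -/
def CondI {q : ℕ} (C : Finset (Fin q × Fin q)) : Prop :=
  ∀ a₁ a₂ : Fin q, a₁ ≠ a₂ → (A1 C a₁ ∩ A1 C a₂).card ≤ 1

/-- Condition (II). -/
def CondII {q : ℕ} (C : Finset (Fin q × Fin q)) : Prop :=
  ¬ ∃ a₁ a₂ a₃ b₁ b₂ b₃ : Fin q,
      a₁ ≠ a₂ ∧ a₁ ≠ a₃ ∧ a₂ ≠ a₃ ∧ b₁ ≠ b₂ ∧ b₁ ≠ b₃ ∧ b₂ ≠ b₃ ∧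
      b₁ ∈ A1 C a₁ ∧ b₂ ∈ A1 C a₁ ∧ b₂ ∈ A1 C a₂ ∧ b₃ ∈ A1 C a₂ ∧
      b₁ ∈ A1 C a₃ ∧ b₃ ∈ A1 C a₃

/-!
If `c ∈ C₁ \ C₂` and `desc(C₁) = desc(C₂)`, then `c` is produced by two words of `C₂`, `(c₁, y)`
and `(x, c₂)` with `x ≠ c₁`, `y ≠ c₂`. The cross word `(x, y)` is a descendant of `C₂`, hence of
`C₁`, and since `C₁` has only one word besides `c`, that word must be `(x, y)` itself. Then
`(c₁, c₂), (c₁, y), (x, c₂), (x, y)` form a rectangle in `C`, i.e. `A¹_{c₁} ∩ A¹_x ⊇ {c₂, y}`,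
contradicting condition (I).
-/

section

variable {q : ℕ}

@[simp]
lemma mem_A1 {C : Finset (Fin q × Fin q)} {a b : Fin q} : b ∈ A1 C a ↔ (a, b) ∈ C := by
  simp [A1]

lemma CondI.eq_or_eq_of_rectangle {C : Finset (Fin q × Fin q)} (hI : CondI C)
    {a a' b b' : Fin q} (hab : (a, b) ∈ C) (hab' : (a, b') ∈ C) (ha'b : (a', b) ∈ C)
    (ha'b' : (a', b') ∈ C) : a = a' ∨ b = b' := by
  by_contra! ⟨ha, hb⟩
  have hsub : ({b, b'} : Finset (Fin q)) ⊆ A1 C a ∩ A1 C a' := by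
    simp [Finset.insert_subset_iff, hab, hab', ha'b, ha'b']
  have := (Finset.card_le_card hsub).trans (hI a a' ha)
  rw [Finset.card_pair hb] at this
  omega

lemma subset_desc2 (S : Finset (Fin q × Fin q)) : (S : Set (Fin q × Fin q)) ⊆ desc2 S :=
  fun c hc => ⟨⟨c, hc, rfl⟩, ⟨c, hc, rfl⟩⟩

lemma mem_of_mem_desc2_of_card_le_two {S : Finset (Fin q × Fin q)} (hS : S.card ≤ 2)
    {c x : Fin q × Fin q} (hc : c ∈ S) (hx : x ∈ desc2 S) (h₁ : x.1 ≠ c.1) (h₂ : x.2 ≠ c.2) :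
    x ∈ S := by
  obtain ⟨⟨f, hf, hf₁⟩, ⟨g, hg, hg₂⟩⟩ := hx
  have hfc : f ≠ c := by rintro rfl; exact h₁ hf₁.symm
  have hgc : g ≠ c := by rintro rfl; exact h₂ hg₂.symm
  have hfg : f = g := by
    by_contra hfg
    exact absurd (Finset.two_lt_card.mpr ⟨c, hc, f, hf, g, hg, hfc.symm, hgc.symm, hfg⟩)
      (not_lt.mpr hS)
  have hx : x = f := Prod.ext hf₁.symm (hfg ▸ hg₂.symm)
  exact hx ▸ hf

lemma CondI.subset_of_desc2_eq {C C₁ C₂ : Finset (Fin q × Fin q)} (hI : CondI C)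
    (h₁ : C₁ ⊆ C) (h₂ : C₂ ⊆ C) (hC₁ : C₁.card ≤ 2) (hd : desc2 C₁ = desc2 C₂) :
    C₁ ⊆ C₂ := by
  intro c hc
  by_contra hc₂
  obtain ⟨⟨d, hd₂, hd₁⟩, ⟨e, he₂, he₂'⟩⟩ : c ∈ desc2 C₂ := hd ▸ subset_desc2 C₁ hc
  have hdc : d.2 ≠ c.2 := fun h => hc₂ (Prod.ext hd₁.symm h.symm ▸ hd₂)
  have hec : e.1 ≠ c.1 := fun h => hc₂ (Prod.ext h.symm he₂'.symm ▸ he₂)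
  have hcross : (e.1, d.2) ∈ C₁ := by
    refine mem_of_mem_desc2_of_card_le_two hC₁ hc ?_ hec hdc
    exact hd ▸ ⟨⟨e, he₂, rfl⟩, ⟨d, hd₂, rfl⟩⟩
  have hrect := hI.eq_or_eq_of_rectangle (h₁ hc) (hd₁ ▸ h₂ hd₂) (he₂' ▸ h₂ he₂) (h₁ hcross)
  exact hrect.elim (fun h => hec h.symm) (fun h => hdc h.symm)

end

theorem sc2_of_condI_condII_general {q : ℕ} (C : Finset (Fin q × Fin q))
    (hI : CondI C) :
    ∀ C₁ C₂ : Finset (Fin q × Fin q),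
      C₁ ⊆ C → C₂ ⊆ C → C₁.Nonempty → C₂.Nonempty → C₁.card ≤ 2 → C₂.card ≤ 2 →
      C₁ ≠ C₂ → desc2 C₁ ≠ desc2 C₂ := by
  intro C₁ C₂ h₁ h₂ _ _ hC₁ hC₂ hne hd
  exact hne (Finset.Subset.antisymm (hI.subset_of_desc2_eq h₁ h₂ hC₁ hd)
    (hI.subset_of_desc2_eq h₂ h₁ hC₂ hd.symm))

/-- A `(2,M,q)` code satisfying conditions (I) and (II) is `2̄`-separable: distinct
nonempty sub-codes of size at most 2 have distinct descendant codes. -/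
theorem sc2_of_condI_condII {q : ℕ} (C : Finset (Fin q × Fin q))
    (hI : CondI C) (hII : CondII C) :
    ∀ C₁ C₂ : Finset (Fin q × Fin q),
      C₁ ⊆ C → C₂ ⊆ C → C₁.Nonempty → C₂.Nonempty → C₁.card ≤ 2 → C₂.card ≤ 2 →
      C₁ ≠ C₂ → desc2 C₁ ≠ desc2 C₂ :=
  sc2_of_condI_condII_general C hI
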